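/- arXiv:2103.16340 — 5 statements merged into one kernel-verified Lean document; each statement's English description precedes it below -/
import Mathlib

section
/- Suppose a job of the sequence is scheduled on the k-th least loaded machine (at the time of its arrival). Then afterwards the load of that machine does not exceed (1 + (m/(m−k+1))·R(J))·OPT(J), where R(J) = min(L/p_max, 1), L is the average load of J and p_max the maximum job size. -/
/-- If a job is scheduled on the k-th least loaded machine, afterwards that machine's load
does not exceed (1 + (m/(m−k+1))·R(J))·OPT(J), where R(J) = min(L/p_max, 1). -/
theorem stmt2 (m k : ℕ) (hk1 : 1 ≤ k) (hkm : k ≤ m)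
    (L pmax OPT l psize : ℝ)
    (hL : 0 ≤ L) (hpmax : 0 < pmax)
    (hLOPT : L ≤ OPT) (hpOPT : pmax ≤ OPT)
    (hl : l ≤ ((m : ℝ) / ((m : ℝ) - k + 1)) * L)
    (hp : psize ≤ pmax) :
    l + psize ≤ (1 + ((m : ℝ) / ((m : ℝ) - k + 1)) * min (L / pmax) 1) * OPT := by
  have hkm' : (k : ℝ) ≤ m := by exact_mod_cast hkm
  have hden : 0 < (m : ℝ) - k + 1 := by linarith
  have hc : 0 ≤ (m : ℝ) / ((m : ℝ) - k + 1) :=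
    div_nonneg (by positivity) hden.le
  have hOPT : 0 < OPT := lt_of_lt_of_le hpmax hpOPT
  have hkey : L ≤ min (L / pmax) 1 * OPT := by
    rcases min_cases (L / pmax) 1 with ⟨h1, h2⟩ | ⟨h1, h2⟩
    · rw [h1]
      calc L = L / pmax * pmax := by field_simp
        _ ≤ L / pmax * OPT := by
            exact mul_le_mul_of_nonneg_left hpOPT (div_nonneg hL hpmax.le)
    · rw [h1, one_mul]; exact hLOPT
  have h2 : ((m : ℝ) / ((m : ℝ) - k + 1)) * L
      ≤ ((m : ℝ) / ((m : ℝ) - k + 1)) * (min (L / pmax) 1 * OPT) :=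
    mul_le_mul_of_nonneg_left hkey hc
  nlinarith [h2, hl, hp, hpOPT]
end

section
/- Let X be a hypergeometric random variable counting the successes in K draws without replacement from a population of size n containing n/4 successes, and let Y ~ Binomial(K, 1/4). Then the mean absolute deviation of X is at most that of Y: E[|X − E[X]|] ≤ E[|Y − E[Y]|]. -/
/-!
Write `μ = K/4` and `m = ⌊μ⌋`. For any law on `{0, …, K}` with mean `μ`, the mean absolute
deviation is `2 ∑_{k ≤ m} P(k) (μ - k)`. For both laws the summands `P(k) (μ - k)` telescope, so
this partial sum is an explicit multiple of the single probability at `m + 1`: it is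
`(3/4) (m+1) P(Y = m+1)` for the binomial and `(m+1) (3s - K + m + 1) / (4s) · P(X = m+1)` for the
hypergeometric law. After clearing factorials the comparison of these two numbers becomes
`12^m (s-1)^(m) · 4^(K-m) (3s)^(K-m) ≤ 3^K (4s)^(K)` (falling factorials), two products of `K`
factors each, which are compared factor by factor.
-/

open Finset

section MeanAbsoluteDeviation

variable {R : Type*} [CommRing R] [LinearOrder R] [IsStrictOrderedRing R]

theorem sum_mul_abs_sub_eq_two_mul_sum_mul_posPart {ι : Type*} (s : Finset ι) (w x : ι → R)
    (μ : R) (hμ : ∑ i ∈ s, w i * (μ - x i) = 0) :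
    ∑ i ∈ s, w i * |x i - μ| = 2 * ∑ i ∈ s, w i * (μ - x i)⁺ := by
  have habs (a : R) : |a| = 2 * a⁺ - a := by
    rw [two_mul, ← two_nsmul, ← add_abs_eq_two_nsmul_posPart]; ring
  calc ∑ i ∈ s, w i * |x i - μ| = ∑ i ∈ s, (2 * (w i * (μ - x i)⁺) - w i * (μ - x i)) :=
        sum_congr rfl fun i _ => by rw [abs_sub_comm, habs]; ring
    _ = 2 * ∑ i ∈ s, w i * (μ - x i)⁺ := by rw [sum_sub_distrib, ← mul_sum, hμ, sub_zero]

theorem sum_range_mul_abs_sub_eq_two_mul_sum_range (n m : ℕ) (w : ℕ → R) (μ : R) (hmn : m ≤ n) (hm : (m : R) ≤ μ)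
    (hμm : μ < m + 1) (hμ : ∑ k ∈ range (n + 1), w k * (μ - k) = 0) :
    ∑ k ∈ range (n + 1), w k * |(k : R) - μ| = 2 * ∑ k ∈ range (m + 1), w k * (μ - k) := by
  rw [sum_mul_abs_sub_eq_two_mul_sum_mul_posPart _ w _ μ hμ,
    ← sum_range_add_sum_Ico _ (by omega : m + 1 ≤ n + 1), sum_eq_zero (s := Ico _ _), add_zero]
  · refine congrArg _ (sum_congr rfl fun k hk => ?_)
    have hkm : (k : R) ≤ m := Nat.cast_le.2 (Nat.lt_succ_iff.1 (mem_range.1 hk))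
    rw [posPart_eq_self.2 (by linarith)]
  · intro k hk
    have hmk : (m : R) + 1 ≤ k := by exact_mod_cast (mem_Ico.1 hk).1
    rw [posPart_eq_zero.2 (by linarith), mul_zero]

end MeanAbsoluteDeviation

section CenteredSums

variable {R : Type*} [CommRing R]

theorem cast_sub_mul_choose (n j : ℕ) :
    ((n : R) - j) * n.choose j = (j + 1) * n.choose (j + 1) := by
  rcases le_or_gt j n with h | h
  · have h1 := congrArg (Nat.cast : ℕ → R) (Nat.choose_succ_right_eq n j)
    push_cast [h] at h1
    linear_combination -h1
  · simp [Nat.choose_eq_zero_of_lt h, Nat.choose_eq_zero_of_lt (Nat.lt_succ_of_lt h)]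

theorem sub_mul_sub_mul_choose_mul_choose (a b K j : ℕ) (hj : j < K) :
    ((a : R) - j) * (K - j) * (a.choose j * b.choose (K - j)) =
      (j + 1) * (b - K + (j + 1)) * (a.choose (j + 1) * b.choose (K - (j + 1))) := by
  have ha := cast_sub_mul_choose (R := R) a j
  have hb := cast_sub_mul_choose (R := R) b (K - (j + 1))
  have hKj : K - j = K - (j + 1) + 1 := by omega
  have hK : (K : R) = (K - (j + 1) : ℕ) + j + 1 := by rw [Nat.cast_sub hj]; push_cast; ring
  rw [hKj, hK]
  linear_combination ((K - (j + 1) : ℕ) + 1 : R) * (b.choose (K - (j + 1) + 1) : R) * ha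
    - ((j : R) + 1) * (a.choose (j + 1) : R) * hb

theorem sum_range_choose_mul_choose_mul (a b K t : ℕ) (ht : t < K) :
    ∑ k ∈ range (t + 1), (a.choose k * b.choose (K - k) : R) * (K * a - (a + b) * k) =
      (t + 1) * (b - K + (t + 1)) * (a.choose (t + 1) * b.choose (K - (t + 1))) := by
  set G : ℕ → R := fun k => k * (b - K + k) * (a.choose k * b.choose (K - k))
  calc _ = ∑ k ∈ range (t + 1), (G (k + 1) - G k) := by
        refine sum_congr rfl fun k hk => ?_
        have hk := sub_mul_sub_mul_choose_mul_choose (R := R) a b K k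
          (lt_of_le_of_lt (Nat.lt_succ_iff.1 (mem_range.1 hk)) ht)
        simp only [G]
        push_cast
        linear_combination hk
    _ = _ := by rw [sum_range_sub]; simp [G]

theorem sum_range_choose_mul_choose_mul_eq_zero (a b K : ℕ) :
    ∑ k ∈ range (K + 1), (a.choose k * b.choose (K - k) : R) * (K * a - (a + b) * k) = 0 := by
  cases K with
  | zero => simp
  | succ K =>
    rw [sum_range_succ, sum_range_choose_mul_choose_mul a b _ K K.lt_succ_self]
    simp only [Nat.succ_eq_add_one, Nat.cast_add, Nat.cast_one, sub_add_cancel, tsub_self,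
      Nat.choose_zero_right, mul_one]
    ring

theorem sub_mul_mul_choose_mul_pow_mul_pow (n j : ℕ) (p q : R) (hj : j < n) :
    ((n : R) - j) * p * (n.choose j * p ^ j * q ^ (n - j)) =
      q * (j + 1) * (n.choose (j + 1) * p ^ (j + 1) * q ^ (n - (j + 1))) := by
  rw [← Nat.sub_add_cancel (Nat.sub_pos_of_lt hj), Nat.sub_sub, pow_succ]
  linear_combination (p ^ (j + 1) * q ^ (n - (j + 1)) * q) * cast_sub_mul_choose (R := R) n j

theorem sum_range_choose_mul_pow_mul_pow_mul (n t : ℕ) (p q : R) (hpq : p + q = 1) (ht : t < n) :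
    ∑ k ∈ range (t + 1), (n.choose k * p ^ k * q ^ (n - k)) * (n * p - k) =
      q * (t + 1) * (n.choose (t + 1) * p ^ (t + 1) * q ^ (n - (t + 1))) := by
  set G : ℕ → R := fun k => q * k * (n.choose k * p ^ k * q ^ (n - k))
  calc _ = ∑ k ∈ range (t + 1), (G (k + 1) - G k) := by
        refine sum_congr rfl fun k hk => ?_
        have hk := sub_mul_mul_choose_mul_pow_mul_pow n k p q
          (lt_of_le_of_lt (Nat.lt_succ_iff.1 (mem_range.1 hk)) ht)
        simp only [G]
        push_cast
        linear_combination hk + (k * (n.choose k * p ^ k * q ^ (n - k)) : R) * hpq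
    _ = _ := by rw [sum_range_sub]; simp [G]

theorem sum_range_choose_mul_pow_mul_pow_mul_eq_zero (n : ℕ) (p q : R) (hpq : p + q = 1) :
    ∑ k ∈ range (n + 1), (n.choose k * p ^ k * q ^ (n - k)) * (n * p - k) = 0 := by
  cases n with
  | zero => simp
  | succ n =>
    rw [sum_range_succ, sum_range_choose_mul_pow_mul_pow_mul _ n p q hpq n.lt_succ_self]
    simp only [Nat.choose_self, Nat.cast_one, one_mul, tsub_self, pow_zero, mul_one, Nat.cast_add]
    linear_combination ((n + 1) * p ^ (n + 1) : R) * hpq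

end CenteredSums

theorem Finset.prod_le_prod_of_injOn_of_one_le {ι κ M : Type*} [CommMonoid M] [PartialOrder M]
    [MulLeftMono M] {s : Finset ι} {t : Finset κ} {f : ι → M} {g : κ → M} (e : ι → κ)
    (he : Set.InjOn e s) (hst : ∀ i ∈ s, e i ∈ t) (hfg : ∀ i ∈ s, f i ≤ g (e i))
    (hg : ∀ k ∈ t, 1 ≤ g k) : ∏ i ∈ s, f i ≤ ∏ k ∈ t, g k := by
  classical
  calc ∏ i ∈ s, f i ≤ ∏ i ∈ s, g (e i) := prod_le_prod' hfg
    _ = ∏ k ∈ s.image e, g k := (prod_image he).symm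
    _ ≤ ∏ k ∈ t, g k := prod_le_prod_of_subset_of_one_le' (image_subset_iff.2 hst)
        fun k hk _ => hg k hk

/-- The factors on the left are matched with those on the right via `i ↦ 4i + 3` and
`i ↦ ⌊4i/3⌋`, whose images are disjoint. -/
theorem prod_mul_prod_le_prod_range (s K : ℕ) (hK : K ≤ 4 * s) :
    (∏ i ∈ range (K / 4), (12 * s - 12 * (i + 1))) * ∏ i ∈ range (K - K / 4), (12 * s - 4 * i)
      ≤ ∏ r ∈ range K, (12 * s - 3 * r) := by
  refine (prod_disjSum (range _) (range _)
    (Sum.elim (fun i => 12 * s - 12 * (i + 1)) fun i => 12 * s - 4 * i)).symm.trans_le ?_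
  refine prod_le_prod_of_injOn_of_one_le (Sum.elim (fun i => 4 * i + 3) fun i => 4 * i / 3)
    ?_ ?_ ?_ fun r hr => ?_
  · rintro (a | a) - (b | b) - h <;>
      simp only [Sum.elim_inl, Sum.elim_inr, Sum.inl.injEq, Sum.inr.injEq, reduceCtorEq] at h ⊢ <;>
      omega
  · rintro (a | a) ha <;>
      simp only [inl_mem_disjSum, inr_mem_disjSum, mem_range, Sum.elim_inl, Sum.elim_inr] at ha ⊢ <;>
      omega
  · rintro (a | a) - <;> simp only [Sum.elim_inl, Sum.elim_inr] <;> omega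
  · have := mem_range.1 hr; omega

theorem pow_mul_descFactorial_mul_le (s K : ℕ) (hK : K ≤ 4 * s) :
    12 ^ (K / 4) * (s - 1).descFactorial (K / 4) *
        (4 ^ (K - K / 4) * (3 * s).descFactorial (K - K / 4))
      ≤ 3 ^ K * (4 * s).descFactorial K := by
  have pow_mul_prod (b n : ℕ) (f : ℕ → ℕ) : b ^ n * ∏ i ∈ range n, f i = ∏ i ∈ range n, b * f i :=
    by simpa using pow_card_mul_prod (s := range n) (b := b) (f := f)
  simp only [Nat.descFactorial_eq_prod_range, pow_mul_prod]
  convert prod_mul_prod_le_prod_range s K hK using 3 <;> omega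

theorem choose_mul_choose_mul_four_pow_le (s K : ℕ) (hK0 : 0 < K) (hK : K ≤ 4 * s) :
    s.choose (K / 4 + 1) * ((3 * s - (K - (K / 4 + 1))) * (3 * s).choose (K - (K / 4 + 1))) * 4 ^ K
      ≤ 3 * s * 3 ^ (K - (K / 4 + 1)) * (K.choose (K / 4 + 1) * (4 * s).choose K) := by
  have key := pow_mul_descFactorial_mul_le s K hK
  set m := K / 4
  set d := K - (m + 1)
  rw [show K - m = d + 1 by omega] at key
  have h12 : (12 : ℕ) ^ m = 3 ^ m * 4 ^ m := by rw [← mul_pow]; norm_num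
  have h4 : 4 ^ K = 4 ^ m * 4 ^ (d + 1) := by rw [← pow_add]; congr 1; omega
  have h3 : 3 ^ K = 3 ^ m * (3 * 3 ^ d) := by rw [← pow_succ', ← pow_add]; congr 1; omega
  have hs_desc : (m + 1).factorial * s.choose (m + 1) = s * (s - 1).descFactorial m := by
    rw [← Nat.descFactorial_eq_factorial_mul_choose]
    conv_lhs => rw [← Nat.sub_add_cancel (show 1 ≤ s by omega)]
    rw [Nat.succ_descFactorial_succ, Nat.sub_add_cancel (by omega)]
  have h3s_desc : (3 * s).descFactorial (d + 1) = (3 * s - d) * (d.factorial * (3 * s).choose d) := by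
    rw [Nat.descFactorial_succ, Nat.descFactorial_eq_factorial_mul_choose]
  have hK_fact : K.choose (m + 1) * (m + 1).factorial * d.factorial = K.factorial :=
    Nat.choose_mul_factorial_mul_factorial (by omega)
  refine Nat.le_of_mul_le_mul_left ?_
    (by positivity : 0 < 3 ^ m * (m + 1).factorial * d.factorial)
  calc 3 ^ m * (m + 1).factorial * d.factorial *
        (s.choose (m + 1) * ((3 * s - d) * (3 * s).choose d) * 4 ^ K)
      = 3 ^ m * 4 ^ m * ((m + 1).factorial * s.choose (m + 1)) *
          (4 ^ (d + 1) * ((3 * s - d) * (d.factorial * (3 * s).choose d))) := by rw [h4]; ring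
    _ = s * (12 ^ m * (s - 1).descFactorial m * (4 ^ (d + 1) * (3 * s).descFactorial (d + 1))) := by
        rw [hs_desc, h3s_desc, h12]; ring
    _ ≤ s * (3 ^ K * (4 * s).descFactorial K) := Nat.mul_le_mul_left s key
    _ = _ := by rw [Nat.descFactorial_eq_factorial_mul_choose, h3, ← hK_fact]; ring

theorem mul_choose_mul_choose_div_le (s K : ℕ) (hK0 : 0 < K) (hK : K ≤ 4 * s) :
    ((K / 4 : ℕ) + 1 : ℝ) * (↑(3 * s) - K + ((K / 4 : ℕ) + 1)) *
        (s.choose (K / 4 + 1) * (3 * s).choose (K - (K / 4 + 1))) / (4 * s * (4 * s).choose K)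
      ≤ 3 / 4 * ((K / 4 : ℕ) + 1) *
        (K.choose (K / 4 + 1) * (1 / 4) ^ (K / 4 + 1) * (3 / 4) ^ (K - (K / 4 + 1))) := by
  have h : (s.choose (K / 4 + 1) * ((3 * s - (K - (K / 4 + 1)) : ℕ) * (3 * s).choose (K - (K / 4 + 1)))
      * 4 ^ K : ℝ) ≤ 3 * s * 3 ^ (K - (K / 4 + 1)) * (K.choose (K / 4 + 1) * (4 * s).choose K) := by
    exact_mod_cast choose_mul_choose_mul_four_pow_le s K hK0 hK
  set m := K / 4
  set d := K - (m + 1)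
  have hcast : ((3 * s : ℕ) : ℝ) - K + (m + 1) = ((3 * s - d : ℕ) : ℝ) := by
    rw [Nat.cast_sub (by omega), Nat.cast_sub (by omega : m + 1 ≤ K)]; push_cast; ring
  have hpow : (1 / 4 : ℝ) ^ (m + 1) * (3 / 4) ^ d = 3 ^ d / 4 ^ K := by
    rw [div_pow, div_pow, one_pow, div_mul_div_comm, one_mul, ← pow_add,
      Nat.add_sub_cancel' (by omega : m + 1 ≤ K)]
  have hs : (0 : ℝ) < s := by norm_cast; omega
  have hN : (0 : ℝ) < (4 * s).choose K := by exact_mod_cast Nat.choose_pos hK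
  rw [hcast, mul_assoc (K.choose (m + 1) : ℝ), hpow]
  calc _ = (m + 1 : ℝ) * (s.choose (m + 1) * ((3 * s - d : ℕ) * (3 * s).choose d) * 4 ^ K)
        / (4 * s * (4 * s).choose K * 4 ^ K) := by field_simp
    _ ≤ (m + 1 : ℝ) * (3 * s * 3 ^ d * (K.choose (m + 1) * (4 * s).choose K))
        / (4 * s * (4 * s).choose K * 4 ^ K) := by gcongr
    _ = _ := by field_simp

theorem stmt6_general (s K : ℕ) (hK : K ≤ 4 * s) :
    ∑ k ∈ Finset.range (K + 1),
        ((Nat.choose s k * Nat.choose (3 * s) (K - k) : ℝ) / (Nat.choose (4 * s) K : ℝ))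
          * |(k : ℝ) - (K : ℝ) / 4|
    ≤ ∑ k ∈ Finset.range (K + 1),
        ((Nat.choose K k : ℝ) * (1 / 4 : ℝ) ^ k * (3 / 4 : ℝ) ^ (K - k))
          * |(k : ℝ) - (K : ℝ) / 4| := by
  rcases Nat.eq_zero_or_pos K with rfl | hK0
  · simp
  have hs : (0 : ℝ) < s := by norm_cast; omega
  have hm : ((K / 4 : ℕ) : ℝ) ≤ K / 4 := by
    rw [le_div_iff₀ four_pos]; exact_mod_cast Nat.div_mul_le_self K 4
  have hm' : (K : ℝ) / 4 < (K / 4 : ℕ) + 1 := by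
    rw [div_lt_iff₀ four_pos]; exact_mod_cast (by omega : K < (K / 4 + 1) * 4)
  have hscale (t : ℕ) : ∑ k ∈ range t,
      (s.choose k * (3 * s).choose (K - k) : ℝ) / (4 * s).choose K * (K / 4 - k) =
        (∑ k ∈ range t, (s.choose k * (3 * s).choose (K - k) : ℝ) * (K * s - (s + ↑(3 * s)) * k))
          / (4 * s * (4 * s).choose K) := by
    rw [sum_div]
    refine sum_congr rfl fun k _ => ?_
    push_cast
    field_simp
    ring
  have hbin := sum_range_choose_mul_pow_mul_pow_mul_eq_zero K (1 / 4 : ℝ) (3 / 4) (by norm_num)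
  have hbin_tail :=
    sum_range_choose_mul_pow_mul_pow_mul K (K / 4) (1 / 4 : ℝ) (3 / 4) (by norm_num) (by omega)
  simp only [mul_one_div] at hbin hbin_tail
  rw [sum_range_mul_abs_sub_eq_two_mul_sum_range K (K / 4) _ _ (Nat.div_le_self K 4) hm hm'
      (by rw [hscale, sum_range_choose_mul_choose_mul_eq_zero, zero_div]),
    sum_range_mul_abs_sub_eq_two_mul_sum_range K (K / 4) _ _ (Nat.div_le_self K 4) hm hm' hbin,
    hscale, sum_range_choose_mul_choose_mul _ _ _ _ (by omega), hbin_tail]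
  exact mul_le_mul_of_nonneg_left (mul_choose_mul_choose_div_le s K hK0 hK) zero_le_two

/-- The mean absolute deviation of a hypergeometric variable X (K draws without replacement
from a population of size n = 4s containing s = n/4 successes) is at most that of
Y ~ Binomial(K, 1/4). Both have mean K/4. -/
theorem stmt6 (s K : ℕ) (hs : 0 < s) (hK : K ≤ 4 * s) :
    ∑ k ∈ Finset.range (K + 1),
        ((Nat.choose s k * Nat.choose (3 * s) (K - k) : ℝ) / (Nat.choose (4 * s) K : ℝ))
          * |(k : ℝ) - (K : ℝ) / 4|
    ≤ ∑ k ∈ Finset.range (K + 1),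
        ((Nat.choose K k : ℝ) * (1 / 4 : ℝ) ^ k * (3 / 4 : ℝ) ^ (K - k))
          * |(k : ℝ) - (K : ℝ) / 4| :=
  stmt6_general s K hK
end

section
/- (de Moivre's mean absolute deviation formula) For Y ~ Binomial(K, p) with 0 < p < 1, the mean absolute deviation satisfies E[|Y − pK|] = 2·⌊pK+1⌋·(1−p)·C(K, ⌊pK+1⌋)·p^{⌊pK+1⌋}·(1−p)^{K−⌊pK+1⌋}. -/
/-- telescoping function for de Moivre's proof -/
noncomputable def deMoivreA (K : ℕ) (p : ℝ) (k : ℕ) : ℝ :=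
  (k : ℝ) * (1 - p) * ((Nat.choose K k : ℝ) * p ^ k * (1 - p) ^ (K - k))

lemma deMoivre_step (K : ℕ) (p : ℝ) (k : ℕ) (hk : k ≤ K) :
    deMoivreA K p (k + 1) - deMoivreA K p k
      = (p * K - k) * ((Nat.choose K k : ℝ) * p ^ k * (1 - p) ^ (K - k)) := by
  rcases eq_or_lt_of_le hk with rfl | hlt
  · simp only [deMoivreA, Nat.choose_succ_self, Nat.cast_zero, Nat.sub_self,
      Nat.choose_self, Nat.cast_one, pow_zero]
    ring
  · have hs : K - k = (K - (k + 1)) + 1 := by omega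
    have hc : ((Nat.choose K (k + 1) : ℝ)) * (k + 1)
        = (Nat.choose K k : ℝ) * ((K : ℝ) - k) := by
      have h := Nat.choose_succ_right_eq K k
      rw [← Nat.cast_sub hk]
      exact_mod_cast h
    simp only [deMoivreA]
    rw [hs, pow_succ]
    push_cast
    linear_combination ((1 - p) * p ^ (k + 1) * (1 - p) ^ (K - (k + 1))) * hc

/-- de Moivre's mean absolute deviation formula for the binomial distribution:
E[|Y − pK|] = 2·⌊pK+1⌋·(1−p)·C(K,⌊pK+1⌋)·p^⌊pK+1⌋·(1−p)^(K−⌊pK+1⌋) for Y ~ Bin(K,p). -/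
theorem stmt7 (K : ℕ) (p : ℝ) (hp0 : 0 < p) (hp1 : p < 1) :
    ∑ k ∈ Finset.range (K + 1),
        ((Nat.choose K k : ℝ) * p ^ k * (1 - p) ^ (K - k)) * |(k : ℝ) - p * K|
    = 2 * (⌊p * K + 1⌋₊ : ℝ) * (1 - p) *
        (Nat.choose K ⌊p * K + 1⌋₊ : ℝ) * p ^ ⌊p * K + 1⌋₊
          * (1 - p) ^ (K - ⌊p * K + 1⌋₊) := by
  set m := ⌊p * K + 1⌋₊ with hm
  set b : ℕ → ℝ := fun k => (Nat.choose K k : ℝ) * p ^ k * (1 - p) ^ (K - k) with hb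
  have hμ0 : (0:ℝ) ≤ p * K := by positivity
  have hm1 : m = ⌊p * (K:ℝ)⌋₊ + 1 := by rw [hm, Nat.floor_add_one hμ0]
  have hmK : m ≤ K + 1 := by
    rw [hm1]
    have : ⌊p * (K:ℝ)⌋₊ ≤ ⌊(K:ℝ)⌋₊ := by
      apply Nat.floor_le_floor
      nlinarith [Nat.cast_nonneg (α := ℝ) K]
    simpa using Nat.add_le_add_right this 1
  -- telescoping
  have tel : ∀ n, n ≤ K + 1 →
      ∑ k ∈ Finset.range n, (p * K - (k:ℝ)) * b k = deMoivreA K p n := by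
    intro n hn
    have h1 : ∑ k ∈ Finset.range n, (p * K - (k:ℝ)) * b k
        = ∑ k ∈ Finset.range n, (deMoivreA K p (k + 1) - deMoivreA K p k) := by
      apply Finset.sum_congr rfl
      intro k hk
      rw [deMoivre_step K p k (by simp at hk; omega)]
    rw [h1, Finset.sum_range_sub]
    simp [deMoivreA]
  -- mean is p*K
  have mean0 : ∑ k ∈ Finset.range (K + 1), (p * K - (k:ℝ)) * b k = 0 := by
    rw [tel (K + 1) le_rfl]
    simp [deMoivreA, Nat.choose_succ_self]
  -- pointwise split
  have split : ∀ k ∈ Finset.range (K + 1),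
      b k * |(k : ℝ) - p * K|
        = ((k:ℝ) - p * K) * b k + (if k < m then 2 * (p * K - k) * b k else 0) := by
    intro k _
    by_cases hkm : k < m
    · have hk_le : (k : ℝ) ≤ p * K := by
        have : k ≤ ⌊p * (K:ℝ)⌋₊ := by omega
        calc (k : ℝ) ≤ (⌊p * (K:ℝ)⌋₊ : ℝ) := by exact_mod_cast this
          _ ≤ p * K := Nat.floor_le hμ0
      rw [if_pos hkm, abs_of_nonpos (by linarith)]
      ring
    · have hk_ge : p * K < (k : ℝ) := by
        have hkm' : ⌊p * (K:ℝ)⌋₊ + 1 ≤ k := by omega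
        calc p * (K:ℝ) < (⌊p * (K:ℝ)⌋₊ : ℝ) + 1 := Nat.lt_floor_add_one _
          _ ≤ k := by exact_mod_cast hkm'
      rw [if_neg hkm, abs_of_pos (by linarith)]
      ring
  rw [Finset.sum_congr rfl split, Finset.sum_add_distrib]
  have h2 : ∑ k ∈ Finset.range (K + 1), ((k:ℝ) - p * K) * b k = 0 := by
    have := mean0
    rw [← neg_eq_zero, ← Finset.sum_neg_distrib]
    convert this using 2 with k
    ring
  rw [h2, zero_add]
  have h3 : ∑ k ∈ Finset.range (K + 1), (if k < m then 2 * (p * K - (k:ℝ)) * b k else 0)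
      = ∑ k ∈ Finset.range m, 2 * (p * K - (k:ℝ)) * b k := by
    rw [← Finset.sum_subset (Finset.range_subset_range.2 hmK)]
    · apply Finset.sum_congr rfl
      intro k hk
      rw [if_pos (Finset.mem_range.1 hk)]
    · intro k _ hk
      rw [if_neg (by simpa using hk)]
  have h4 : ∑ k ∈ Finset.range m, 2 * (p * K - (k:ℝ)) * b k
      = 2 * ∑ k ∈ Finset.range m, (p * K - (k:ℝ)) * b k := by
    rw [Finset.mul_sum]
    exact Finset.sum_congr rfl fun k _ => by ring
  rw [h3, h4, tel m hmK]
  simp only [deMoivreA]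
  ring
end

section
/- In the preparation phase (Algorithm 3), whenever a machine contains a single medium job, there exists an unsaturated medium size class: the number of machines with critical jobs from sampling equals Σ_{p medium} n̂_p, while the number of available medium placeholder jobs is Σ_{p medium} (c_p − n̂_p) ≥ Σ_{p medium} n̂_p, using that c_p ≥ 2·n̂_p for medium classes p. -/
/-- In the preparation phase, the supply of medium placeholder jobs Σ_p (c_p − n̂_p) covers
all Σ_p n̂_p machines holding a single medium job (using c_p ≥ 2·n̂_p and c_p even), and
as long as not all such machines are filled (c'_p counting scheduled p-jobs with n̂_p ≤ c'_p),
an unsaturated medium size class exists. -/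
theorem stmt9 (Pmed : Finset ℕ) (nhat c c' : ℕ → ℕ)
    (hc : ∀ p ∈ Pmed, 2 * nhat p ≤ c p)
    (hceven : ∀ p ∈ Pmed, Even (c p))
    (hc' : ∀ p ∈ Pmed, nhat p ≤ c' p)
    (hneed : ∑ p ∈ Pmed, (c' p - nhat p) < ∑ p ∈ Pmed, nhat p) :
    (∑ p ∈ Pmed, nhat p ≤ ∑ p ∈ Pmed, (c p - nhat p)) ∧ ∃ p ∈ Pmed, c' p < c p := by
  constructor
  · exact Finset.sum_le_sum fun p hp => by have := hc p hp; omega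
  · by_contra h
    push_neg at h
    have : ∑ p ∈ Pmed, nhat p ≤ ∑ p ∈ Pmed, (c' p - nhat p) :=
      Finset.sum_le_sum fun p hp => by have := hc p hp; have := h p hp; omega
    omega
end

section
/- With L̃ the maximum average pseudo-load including placeholder jobs, there holds L̃ ≤ L + 2·p_max, and therefore R̃(J) = min(L̃/p_max, L̃/L) ≤ 3. -/
/-- L̃ ≤ L + 2·p_max (placeholder load per machine is at most 2·p_max and the real load totals
at most m·L), and therefore R̃(J) = min(L̃/p_max, L̃/L) ≤ 3. -/
theorem stmt12 (m : ℕ) (hm : 0 < m) (L pmax : ℝ) (hL : 0 < L) (hpmax : 0 < pmax)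
    (realLoad ph : ℕ → Fin m → ℝ)
    (hreal0 : ∀ t M, 0 ≤ realLoad t M) (hph0 : ∀ t M, 0 ≤ ph t M)
    (hreal : ∀ t, ∑ M, realLoad t M ≤ (m : ℝ) * L)
    (hph : ∀ t M, ph t M ≤ 2 * pmax) :
    (⨆ t : ℕ, (1 / (m : ℝ)) * ∑ M, (realLoad t M + ph t M)) ≤ L + 2 * pmax ∧
    min ((⨆ t : ℕ, (1 / (m : ℝ)) * ∑ M, (realLoad t M + ph t M)) / pmax)
        ((⨆ t : ℕ, (1 / (m : ℝ)) * ∑ M, (realLoad t M + ph t M)) / L) ≤ 3 := by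
  have hm' : (0:ℝ) < m := by exact_mod_cast hm
  have hbnd : ∀ t : ℕ, (1 / (m : ℝ)) * ∑ M, (realLoad t M + ph t M) ≤ L + 2 * pmax := by
    intro t
    have hsum : ∑ M, (realLoad t M + ph t M) ≤ (m:ℝ) * L + (m:ℝ) * (2 * pmax) := by
      rw [Finset.sum_add_distrib]
      gcongr
      · exact hreal t
      · calc ∑ M, ph t M ≤ ∑ _M : Fin m, 2 * pmax := by
              exact Finset.sum_le_sum fun M _ => hph t M
          _ = (m:ℝ) * (2 * pmax) := by simp [Finset.sum_const, mul_comm]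
    rw [one_div, inv_mul_le_iff₀ hm']
    calc ∑ M, (realLoad t M + ph t M) ≤ (m:ℝ) * L + (m:ℝ) * (2 * pmax) := hsum
      _ = (m:ℝ) * (L + 2 * pmax) := by ring
  have hsup : (⨆ t : ℕ, (1 / (m : ℝ)) * ∑ M, (realLoad t M + ph t M)) ≤ L + 2 * pmax :=
    Real.iSup_le hbnd (by positivity)
  refine ⟨hsup, ?_⟩
  rcases le_total pmax L with h | h
  · refine le_trans (min_le_right _ _) ?_
    rw [div_le_iff₀ hL]
    calc (⨆ t : ℕ, (1 / (m : ℝ)) * ∑ M, (realLoad t M + ph t M)) ≤ L + 2 * pmax := hsup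
      _ ≤ L + 2 * L := by linarith
      _ = 3 * L := by ring
  · refine le_trans (min_le_left _ _) ?_
    rw [div_le_iff₀ hpmax]
    calc (⨆ t : ℕ, (1 / (m : ℝ)) * ∑ M, (realLoad t M + ph t M)) ≤ L + 2 * pmax := hsup
      _ ≤ pmax + 2 * pmax := by linarith
      _ = 3 * pmax := by ring
end
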